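/- Let A ∈ ℝ^{k×d} be a random matrix whose entries are i.i.d. with mean zero, unit variance and fourth moment Δ. Fix x ∈ ℝ^d and let f(x) = (1/√k) A x. Then Var(‖f(x)‖₂²) = (1/k)[(Δ − 3)‖x‖₄⁴ + 2‖x‖₂⁴]. -/

import Mathlib

/-!
Write `‖f x‖² = k⁻¹ ∑ᵢ Zᵢ` with `Zᵢ = (∑ₛ Aᵢₛ xₛ)²`. Distinct rows of `A` are independent, so
`Var ‖f x‖² = k⁻² ∑ᵢ Var Zᵢ`, and it remains to compute the variance of the square of a single
sum `Y = ∑ₛ bₛ` of independent centred terms `bₛ = Aᵢₛ xₛ`. Expanding `(X + Y)⁴` binomially for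
independent centred `X`, `Y` kills the odd cross terms, and induction on the number of terms gives
`E Y⁴ = ∑ E bₛ⁴ + 3 ((∑ E bₛ²)² - ∑ (E bₛ²)²)`, while `E Y² = ∑ E bₛ²`. With `E bₛ² = xₛ²` and
`E bₛ⁴ = Δ xₛ⁴` this yields `Var Y² = E Y⁴ - (E Y²)² = (Δ - 3) ‖x‖₄⁴ + 2 ‖x‖₂⁴`.
-/

open MeasureTheory ProbabilityTheory Finset
open scoped ENNReal

section

variable {Ω : Type*} [MeasurableSpace Ω] {μ : Measure Ω}

lemma ProbabilityTheory.iIndepFun.indepFun_fun_finsetSum_of_notMem {ι : Type*} {b : ι → Ω → ℝ}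
    (hindep : iIndepFun b μ) (hb : ∀ i, Measurable (b i)) {S : Finset ι} {i : ι} (hi : i ∉ S) :
    IndepFun (b i) (fun ω => ∑ j ∈ S, b j ω) μ := by
  simpa only [Finset.sum_fn] using (hindep.indepFun_finsetSum_of_notMem hb hi).symm

lemma ProbabilityTheory.iIndepFun.indepFun_row {ι κ β : Type*} [Fintype κ] [MeasurableSpace β]
    {A : Ω → ι → κ → β} (hindep : iIndepFun (fun (p : ι × κ) ω => A ω p.1 p.2) μ)
    (hA : ∀ i j, Measurable fun ω => A ω i j) {i i' : ι} (hii' : i ≠ i') :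
    IndepFun (fun ω => A ω i) (fun ω => A ω i') μ := by
  classical
  have hdisj : Disjoint ({i} ×ˢ univ : Finset (ι × κ)) ({i'} ×ˢ univ) := by
    simp [disjoint_left, Ne.symm hii']
  have hrow : ∀ l : ι, Measurable fun (w : ({l} ×ˢ univ : Finset (ι × κ)) → β) (s : κ) =>
      w ⟨(l, s), by simp⟩ := fun l =>
    measurable_pi_lambda _ fun s => measurable_pi_apply _
  exact (hindep.indepFun_finset _ _ hdisj fun p => hA p.1 p.2).comp (hrow i) (hrow i')

section IsFiniteMeasure

variable [IsFiniteMeasure μ]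

lemma MeasureTheory.MemLp.integrable_pow_of_le {X : Ω → ℝ} {p : ℝ≥0∞} (hX : MemLp X p μ)
    {j : ℕ} (hj : (j : ℝ≥0∞) ≤ p) : Integrable (fun ω => X ω ^ j) μ := by
  refine (integrable_norm_iff ?_).1 ?_
  · exact hX.aestronglyMeasurable.pow j
  · simpa only [norm_pow] using (hX.mono_exponent hj).integrable_norm_pow'

lemma MeasureTheory.MemLp.sq {X : Ω → ℝ} (hX : MemLp X 4 μ) :
    MemLp (fun ω => X ω ^ 2) 2 μ := by
  refine (memLp_two_iff_integrable_sq ?_).2 ?_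
  · exact hX.aestronglyMeasurable.pow 2
  · simpa only [← pow_mul] using hX.integrable_pow_of_le (j := 4) (by norm_num)

lemma ProbabilityTheory.IndepFun.integral_add_pow {X Y : Ω → ℝ} (hXY : IndepFun X Y μ) {n : ℕ}
    (hX : MemLp X n μ) (hY : MemLp Y n μ) :
    ∫ ω, (X ω + Y ω) ^ n ∂μ
      = ∑ j ∈ range (n + 1), (∫ ω, X ω ^ j ∂μ) * (∫ ω, Y ω ^ (n - j) ∂μ) * n.choose j := by
  have hpow : ∀ j m : ℕ, IndepFun (fun ω => X ω ^ j) (fun ω => Y ω ^ m) μ := fun j m =>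
    hXY.comp (measurable_id.pow_const j) (measurable_id.pow_const m)
  have hterm : ∀ j ∈ range (n + 1),
      Integrable (fun ω => X ω ^ j * Y ω ^ (n - j) * n.choose j) μ := fun j hj =>
    ((hpow j (n - j)).integrable_mul
      (hX.integrable_pow_of_le (by exact_mod_cast mem_range_succ_iff.1 hj))
      (hY.integrable_pow_of_le (by exact_mod_cast Nat.sub_le n j))).mul_const _
  simp_rw [add_pow]
  rw [integral_finsetSum _ hterm]
  refine sum_congr rfl fun j _ => ?_
  rw [integral_mul_const]
  congr 1
  exact (hpow j (n - j)).integral_mul_eq_mul_integral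
    (hX.aestronglyMeasurable.pow j) (hY.aestronglyMeasurable.pow _)

end IsFiniteMeasure

variable [IsProbabilityMeasure μ]

lemma ProbabilityTheory.IndepFun.integral_add_sq {X Y : Ω → ℝ} (hXY : IndepFun X Y μ)
    (hX : MemLp X 2 μ) (hY : MemLp Y 2 μ) (hX0 : μ[X] = 0) :
    ∫ ω, (X ω + Y ω) ^ 2 ∂μ = ∫ ω, X ω ^ 2 ∂μ + ∫ ω, Y ω ^ 2 ∂μ := by
  rw [hXY.integral_add_pow (n := 2) (by exact_mod_cast hX) (by exact_mod_cast hY)]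
  simp [sum_range_succ, hX0, add_comm]

lemma ProbabilityTheory.IndepFun.integral_add_pow_four {X Y : Ω → ℝ} (hXY : IndepFun X Y μ)
    (hX : MemLp X 4 μ) (hY : MemLp Y 4 μ) (hX0 : μ[X] = 0) (hY0 : μ[Y] = 0) :
    ∫ ω, (X ω + Y ω) ^ 4 ∂μ
      = ∫ ω, X ω ^ 4 ∂μ + 6 * (∫ ω, X ω ^ 2 ∂μ) * (∫ ω, Y ω ^ 2 ∂μ) + ∫ ω, Y ω ^ 4 ∂μ := by
  rw [hXY.integral_add_pow (n := 4) (by exact_mod_cast hX) (by exact_mod_cast hY)]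
  simp [sum_range_succ, hX0, hY0, Nat.choose]
  ring

namespace ProbabilityTheory.iIndepFun

variable {ι : Type*} {b : ι → Ω → ℝ} (hindep : iIndepFun b μ) (hb : ∀ i, Measurable (b i))
  (hL4 : ∀ i, MemLp (b i) 4 μ) (h0 : ∀ i, μ[b i] = 0)
include hindep hb hL4 h0

lemma integral_finsetSum_sq (S : Finset ι) :
    ∫ ω, (∑ i ∈ S, b i ω) ^ 2 ∂μ = ∑ i ∈ S, ∫ ω, b i ω ^ 2 ∂μ := by
  classical
  induction S using Finset.induction_on with
  | empty => simp
  | insert i S hi ih =>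
    have hL2 : ∀ i, MemLp (b i) 2 μ := fun i => (hL4 i).mono_exponent (by norm_num)
    simp only [sum_insert hi]
    rw [(hindep.indepFun_fun_finsetSum_of_notMem hb hi).integral_add_sq (hL2 i)
      (memLp_finsetSum S fun j _ => hL2 j) (h0 i), ih]

lemma integral_finsetSum_pow_four (S : Finset ι) :
    ∫ ω, (∑ i ∈ S, b i ω) ^ 4 ∂μ = ∑ i ∈ S, ∫ ω, b i ω ^ 4 ∂μ
      + 3 * ((∑ i ∈ S, ∫ ω, b i ω ^ 2 ∂μ) ^ 2 - ∑ i ∈ S, (∫ ω, b i ω ^ 2 ∂μ) ^ 2) := by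
  classical
  induction S using Finset.induction_on with
  | empty => simp
  | insert i S hi ih =>
    have hS0 : ∫ ω, ∑ j ∈ S, b j ω ∂μ = 0 := by
      rw [integral_finsetSum S fun j _ => (hL4 j).integrable (by norm_num)]
      simp [h0]
    simp only [sum_insert hi]
    rw [(hindep.indepFun_fun_finsetSum_of_notMem hb hi).integral_add_pow_four (hL4 i)
      (memLp_finsetSum S fun j _ => hL4 j) (h0 i) hS0, ih,
      integral_finsetSum_sq hindep hb hL4 h0 S]
    ring

lemma variance_finsetSum_sq (S : Finset ι) :
    variance (fun ω => (∑ i ∈ S, b i ω) ^ 2) μ = ∑ i ∈ S, ∫ ω, b i ω ^ 4 ∂μ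
      + 2 * (∑ i ∈ S, ∫ ω, b i ω ^ 2 ∂μ) ^ 2 - 3 * ∑ i ∈ S, (∫ ω, b i ω ^ 2 ∂μ) ^ 2 := by
  have hS : MemLp (fun ω => ∑ i ∈ S, b i ω) 4 μ := memLp_finsetSum S fun i _ => hL4 i
  rw [variance_eq_sub hS.sq]
  simp only [Pi.pow_apply, ← pow_mul]
  rw [integral_finsetSum_pow_four hindep hb hL4 h0, integral_finsetSum_sq hindep hb hL4 h0]
  ring

end ProbabilityTheory.iIndepFun

lemma ProbabilityTheory.iIndepFun.variance_sq_sum_mul {κ : Type*} [Fintype κ] {a : κ → Ω → ℝ}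
    (hindep : iIndepFun a μ) (ha : ∀ s, Measurable (a s)) (hL4 : ∀ s, MemLp (a s) 4 μ)
    (h0 : ∀ s, μ[a s] = 0) (h2 : ∀ s, ∫ ω, a s ω ^ 2 ∂μ = 1) {Δ : ℝ}
    (h4 : ∀ s, ∫ ω, a s ω ^ 4 ∂μ = Δ) (x : κ → ℝ) :
    variance (fun ω => (∑ s, a s ω * x s) ^ 2) μ
      = (Δ - 3) * ∑ s, x s ^ 4 + 2 * (∑ s, x s ^ 2) ^ 2 := by
  have hb : iIndepFun (fun s ω => a s ω * x s) μ :=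
    hindep.comp (fun s t => t * x s) fun s => measurable_mul_const (x s)
  rw [hb.variance_finsetSum_sq (fun s => (ha s).mul_const _) (fun s => (hL4 s).mul_const _)
    (fun s => by simp [integral_mul_const, h0 s])]
  simp only [mul_pow, integral_mul_const, h4, h2, one_mul, ← pow_mul, ← mul_sum]
  ring

end

theorem stmt5_general {Ω : Type*} [MeasurableSpace Ω] (μ : Measure Ω) [IsProbabilityMeasure μ]
    {k d : ℕ} (Δ : ℝ)
    (A : Ω → Fin k → Fin d → ℝ)
    (hmeas : ∀ i j, Measurable fun ω => A ω i j)
    (hindep : iIndepFun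
        (fun (p : Fin k × Fin d) (ω : Ω) => A ω p.1 p.2) μ)
    (hL4 : ∀ i j, MemLp (fun ω => A ω i j) 4 μ)
    (hmean : ∀ i j, ∫ ω, A ω i j ∂μ = 0)
    (hvar : ∀ i j, ∫ ω, (A ω i j) ^ 2 ∂μ = 1)
    (h4 : ∀ i j, ∫ ω, (A ω i j) ^ 4 ∂μ = Δ)
    (x : Fin d → ℝ) :
    variance (fun ω => ∑ i : Fin k, ((1 / Real.sqrt k) * ∑ s : Fin d, A ω i s * x s) ^ 2) μ
      = (1 / k) * ((Δ - 3) * ∑ s : Fin d, (x s) ^ 4 + 2 * (∑ s : Fin d, (x s) ^ 2) ^ 2) := by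
  set Z : Fin k → Ω → ℝ := fun i ω => (∑ s, A ω i s * x s) ^ 2 with hZ
  have hZvar : ∀ i, variance (Z i) μ = (Δ - 3) * ∑ s, x s ^ 4 + 2 * (∑ s, x s ^ 2) ^ 2 :=
    fun i => (hindep.precomp (Prod.mk_right_injective i)).variance_sq_sum_mul (hmeas i) (hL4 i)
      (hmean i) (hvar i) (h4 i) x
  have hZL2 : ∀ i, MemLp (Z i) 2 μ := fun i =>
    (memLp_finsetSum _ fun s _ => (hL4 i s).mul_const (x s)).sq
  have hsq : Measurable fun r : Fin d → ℝ => (∑ s, r s * x s) ^ 2 := by fun_prop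
  have hZindep : Set.Pairwise (univ : Finset (Fin k)) fun i i' => IndepFun (Z i) (Z i') μ :=
    fun i _ i' _ hii' => (hindep.indepFun_row hmeas hii').comp hsq hsq
  calc variance (fun ω => ∑ i : Fin k, ((1 / Real.sqrt k) * ∑ s : Fin d, A ω i s * x s) ^ 2) μ
      = variance (fun ω => (1 / k : ℝ) * ∑ i, Z i ω) μ := by
        simp only [hZ, mul_pow, ← mul_sum, div_pow, one_pow, Real.sq_sqrt (Nat.cast_nonneg k)]
    _ = (1 / k) ^ 2 * ∑ i, variance (Z i) μ := by
        rw [variance_const_mul, ← sum_fn, IndepFun.variance_sum (fun i _ => hZL2 i) hZindep]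
    _ = _ := by
        simp only [hZvar, sum_const, card_univ, Fintype.card_fin, nsmul_eq_mul]
        rcases eq_or_ne (k : ℝ) 0 with hk | hk
        · simp [hk] -- both sides are `0`, as `1 / 0 = 0`
        · field_simp

/-- variance of the squared norm of `f(x) = (1/√k) A x`, for `A` with
i.i.d. mean-zero unit-variance entries with fourth moment `Δ`:
`Var(‖f(x)‖₂²) = (1/k) [(Δ − 3) ‖x‖₄⁴ + 2 ‖x‖₂⁴]`. -/
theorem stmt5 {Ω : Type*} [MeasurableSpace Ω] (μ : Measure Ω) [IsProbabilityMeasure μ]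
    {k d : ℕ} (hk : 0 < k) (Δ : ℝ)
    (A : Ω → Fin k → Fin d → ℝ)
    (hmeas : ∀ i j, Measurable fun ω => A ω i j)
    (hindep : iIndepFun
        (fun (p : Fin k × Fin d) (ω : Ω) => A ω p.1 p.2) μ)
    (hident : ∀ p q : Fin k × Fin d,
        IdentDistrib (fun ω => A ω p.1 p.2) (fun ω => A ω q.1 q.2) μ μ)
    (hL4 : ∀ i j, MemLp (fun ω => A ω i j) 4 μ)
    (hmean : ∀ i j, ∫ ω, A ω i j ∂μ = 0)
    (hvar : ∀ i j, ∫ ω, (A ω i j) ^ 2 ∂μ = 1)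
    (h4 : ∀ i j, ∫ ω, (A ω i j) ^ 4 ∂μ = Δ)
    (x : Fin d → ℝ) :
    variance (fun ω => ∑ i : Fin k, ((1 / Real.sqrt k) * ∑ s : Fin d, A ω i s * x s) ^ 2) μ
      = (1 / k) * ((Δ - 3) * ∑ s : Fin d, (x s) ^ 4 + 2 * (∑ s : Fin d, (x s) ^ 2) ^ 2) :=
  stmt5_general μ Δ A hmeas hindep hL4 hmean hvar h4 x
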